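/- arXiv:2306.14909 — 7 statements merged into one kernel-verified Lean document; each statement's English description precedes it below -/
import Mathlib

section
/- Every isometry of n-dimensional Euclidean space is the composition of at most n+1 reflections: for any bijective distance-preserving map φ : ℝⁿ → ℝⁿ, there exist at most n+1 affine hyperplanes H₁, …, H_{n+1} in ℝⁿ such that φ equals the composition of the orthogonal reflections across these hyperplanes. -/
open EuclideanGeometry AffineSubspace Module

lemma aux_refl_conj {n : ℕ} (p x : EuclideanSpace ℝ (Fin n))
    (s : AffineSubspace ℝ (EuclideanSpace ℝ (Fin n))) [Nonempty s] (hp : p ∈ s)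
    (K : Submodule ℝ (EuclideanSpace ℝ (Fin n))) (hK : s.direction = K) :
    EuclideanGeometry.reflection s x = p + (Submodule.reflection K) (x - p) := by
  subst hK
  have hx : x = (x - p) +ᵥ p := by simp [vadd_eq_add]
  rw [EuclideanGeometry.reflection_apply']
  have h1 : (EuclideanGeometry.orthogonalProjection s x : EuclideanSpace ℝ (Fin n))
      = (Submodule.orthogonalProjectionOnto s.direction (x - p) : EuclideanSpace ℝ (Fin n)) + p := by
    conv_lhs => rw [hx]
    rw [ContinuousAffineMap.map_vadd, orthogonalProjection_contLinear]
    have h2 : (EuclideanGeometry.orthogonalProjection s p : EuclideanSpace ℝ (Fin n)) = p :=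
      orthogonalProjection_eq_self_iff.mpr hp
    simp [vadd_eq_add, h2]
  rw [h1, Submodule.reflection_apply]
  simp only [vsub_eq_sub, vadd_eq_add, two_smul, Submodule.coe_orthogonalProjectionOnto_apply]
  abel

lemma aux_refl_perp {n : ℕ} (p q : EuclideanSpace ℝ (Fin n))
    [Nonempty (perpBisector p q)] :
    EuclideanGeometry.reflection (perpBisector p q) q = p := by
  rw [aux_refl_conj (midpoint ℝ p q) q _ (midpoint_mem_perpBisector p q)
    ((ℝ ∙ (q - p))ᗮ) (by simpa [vsub_eq_sub] using direction_perpBisector p q)]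
  have hmem : q - midpoint ℝ p q ∈ ((ℝ ∙ (q - p))ᗮ)ᗮ := by
    apply Submodule.le_orthogonal_orthogonal
    refine Submodule.mem_span_singleton.mpr ⟨(2⁻¹ : ℝ), ?_⟩
    rw [midpoint_eq_smul_add]
    match_scalars <;> simp [invOf_eq_inv] <;> norm_num
  rw [Submodule.reflection_mem_subspace_orthogonalComplement_eq_neg hmem, midpoint_eq_smul_add]
  match_scalars <;> simp [invOf_eq_inv] <;> norm_num

lemma aux_finrank_orth {n : ℕ} {v : EuclideanSpace ℝ (Fin n)} (hv : v ≠ 0) :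
    finrank ℝ ((ℝ ∙ v)ᗮ : Submodule ℝ (EuclideanSpace ℝ (Fin n))) = n - 1 := by
  have h1 : finrank ℝ (ℝ ∙ v : Submodule ℝ (EuclideanSpace ℝ (Fin n))) = 1 :=
    finrank_span_singleton hv
  have h2 := Submodule.finrank_add_finrank_orthogonal
    (K := (ℝ ∙ v : Submodule ℝ (EuclideanSpace ℝ (Fin n))))
  have h3 : finrank ℝ (EuclideanSpace ℝ (Fin n)) = n := finrank_euclideanSpace_fin
  omega

lemma aux_refl_zero {n : ℕ} :
    Submodule.reflection ((ℝ ∙ (0 : EuclideanSpace ℝ (Fin n)))ᗮ) = 1 := by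
  ext x
  rw [Submodule.reflection_apply, Submodule.starProjection_eq_self_iff.mpr (by
    rw [Submodule.span_zero_singleton, Submodule.bot_orthogonal_eq_top]; trivial)]
  simp [two_smul]

lemma aux_filter_prod {n : ℕ} (l : List (EuclideanSpace ℝ (Fin n))) :
    ∃ l' : List (EuclideanSpace ℝ (Fin n)), l'.length ≤ l.length ∧ (∀ v ∈ l', v ≠ 0) ∧
      (l'.map fun v => Submodule.reflection (ℝ ∙ v)ᗮ).prod
        = (l.map fun v => Submodule.reflection (ℝ ∙ v)ᗮ).prod := by
  induction l with
  | nil => exact ⟨[], le_rfl, by simp, rfl⟩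
  | cons a l ih =>
    obtain ⟨l', hlen, hne, hprod⟩ := ih
    by_cases ha : a = 0
    · refine ⟨l', hlen.trans (Nat.le_succ _), hne, ?_⟩
      subst ha
      rw [hprod, List.map_cons, List.prod_cons, aux_refl_zero, one_mul]
    · exact ⟨a :: l', by simpa using hlen, by simpa [ha] using hne,
        by rw [List.map_cons, List.prod_cons, hprod, List.map_cons, List.prod_cons]⟩

lemma aux_conj_prod {n : ℕ} (p : EuclideanSpace ℝ (Fin n)) (l : List (EuclideanSpace ℝ (Fin n)))
    (x : EuclideanSpace ℝ (Fin n)) :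
    ((l.map (fun v (y : EuclideanSpace ℝ (Fin n)) =>
        p + (Submodule.reflection (ℝ ∙ v)ᗮ) (y - p))).foldr (· ∘ ·) id) x
      = p + ((l.map fun v => Submodule.reflection (ℝ ∙ v)ᗮ).prod) (x - p) := by
  induction l generalizing x with
  | nil => simp
  | cons a l ih =>
    simp only [List.map_cons, List.foldr_cons, Function.comp_apply, List.prod_cons, ih]
    congr 1
    simp

/-- A map `f : ℝⁿ → ℝⁿ` is the orthogonal reflection across some affine hyperplane
(a nonempty affine subspace whose direction has dimension `n - 1`). -/
def IsHyperplaneReflection (n : ℕ)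
    (f : EuclideanSpace ℝ (Fin n) → EuclideanSpace ℝ (Fin n)) : Prop :=
  ∃ (H : AffineSubspace ℝ (EuclideanSpace ℝ (Fin n))) (_ : Nonempty H),
    Module.finrank ℝ H.direction = n - 1 ∧ ∀ x, f x = EuclideanGeometry.reflection H x

/-- Every isometry of `n`-dimensional Euclidean space is the
composition of at most `n + 1` reflections across affine hyperplanes. -/
theorem stmt_3 (n : ℕ) (φ : EuclideanSpace ℝ (Fin n) → EuclideanSpace ℝ (Fin n))
    (hbij : Function.Bijective φ) (hiso : ∀ x y, dist (φ x) (φ y) = dist x y) :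
    ∃ (k : ℕ), k ≤ n + 1 ∧
      ∃ f : Fin k → (EuclideanSpace ℝ (Fin n) → EuclideanSpace ℝ (Fin n)),
        (∀ i, IsHyperplaneReflection n (f i)) ∧ φ = (List.ofFn f).foldr (· ∘ ·) id := by
  classical
  by_cases hid : φ = id
  · exact ⟨0, Nat.zero_le _, fun i => i.elim0, fun i => i.elim0, by simp [hid]⟩
  obtain ⟨p, hp⟩ : ∃ p, φ p ≠ p := by
    by_contra h; push_neg at h; exact hid (funext h)
  set q := φ p with hq
  have hqp : q - p ≠ 0 := sub_ne_zero.mpr hp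
  haveI hne₀ : Nonempty (perpBisector p q) := ⟨⟨_, midpoint_mem_perpBisector p q⟩⟩
  set s₀ := perpBisector p q with hs₀
  have hρq : EuclideanGeometry.reflection s₀ q = p := aux_refl_perp p q
  -- build the isometry equivalence fixing 0
  let φe : EuclideanSpace ℝ (Fin n) ≃ᵢ EuclideanSpace ℝ (Fin n) :=
    { toEquiv := Equiv.ofBijective φ hbij
      isometry_toFun := Isometry.of_dist_eq hiso }
  let ρe := (EuclideanGeometry.reflection s₀).toIsometryEquiv
  let ψe : EuclideanSpace ℝ (Fin n) ≃ᵢ EuclideanSpace ℝ (Fin n) :=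
    (((IsometryEquiv.addRight p).trans φe).trans ρe).trans (IsometryEquiv.addRight (-p))
  have hψ : ∀ x, ψe x = EuclideanGeometry.reflection s₀ (φ (x + p)) - p := by
    intro x
    simp only [ψe, IsometryEquiv.trans_apply]
    rw [sub_eq_add_neg]
    rfl
  have hψ0 : ψe 0 = 0 := by
    rw [hψ, zero_add, ← hq, hρq, sub_self]
  let L := ψe.toRealLinearIsometryEquivOfMapZero hψ0
  have hL : ∀ x, (L : EuclideanSpace ℝ (Fin n) → EuclideanSpace ℝ (Fin n)) x
      = EuclideanGeometry.reflection s₀ (φ (x + p)) - p := by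
    intro x
    rw [IsometryEquiv.coe_toRealLinearIsometryEquivOfMapZero, hψ]
  obtain ⟨l₀, hlen₀, hLl₀⟩ := L.reflections_generate_dim
  rw [finrank_euclideanSpace_fin] at hlen₀
  obtain ⟨l, hlen, hnz, hprod⟩ := aux_filter_prod l₀
  have hLl : L = (l.map fun v => Submodule.reflection (ℝ ∙ v)ᗮ).prod := by
    rw [hLl₀, hprod]
  -- recover φ
  have hφ : ∀ x, φ x = EuclideanGeometry.reflection s₀
      (p + ((l.map fun v => Submodule.reflection (ℝ ∙ v)ᗮ).prod) (x - p)) := by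
    intro x
    have h1 : (L : EuclideanSpace ℝ (Fin n) → EuclideanSpace ℝ (Fin n)) (x - p)
        = EuclideanGeometry.reflection s₀ (φ x) - p := by
      rw [hL, sub_add_cancel]
    have h2 : p + ((l.map fun v => Submodule.reflection (ℝ ∙ v)ᗮ).prod) (x - p)
        = EuclideanGeometry.reflection s₀ (φ x) := by
      rw [← hLl, h1]; abel
    rw [h2, EuclideanGeometry.reflection_reflection]
  refine ⟨l.length + 1, by omega,
    Fin.cons (fun x => EuclideanGeometry.reflection s₀ x)
      (fun i x => p + (Submodule.reflection (ℝ ∙ (l.get i))ᗮ) (x - p)), ?_, ?_⟩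
  · intro i
    refine Fin.cases ?_ ?_ i
    · refine ⟨s₀, hne₀, ?_, fun x => by rw [Fin.cons_zero]⟩
      have hd : s₀.direction = (ℝ ∙ (q - p))ᗮ := by
        rw [hs₀, direction_perpBisector, vsub_eq_sub]
      rw [hd]; exact aux_finrank_orth hqp
    · intro j
      have hv : l.get j ≠ 0 := hnz _ (List.get_mem l j)
      haveI : Nonempty (mk' p ((ℝ ∙ (l.get j))ᗮ : Submodule ℝ (EuclideanSpace ℝ (Fin n)))) :=
        ⟨⟨p, self_mem_mk' _ _⟩⟩
      refine ⟨mk' p (ℝ ∙ (l.get j))ᗮ, inferInstance, ?_, ?_⟩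
      · rw [direction_mk']; exact aux_finrank_orth hv
      · intro x
        rw [Fin.cons_succ, aux_refl_conj p x _ (self_mem_mk' _ _) _ (direction_mk' _ _)]
  · funext x
    rw [List.ofFn_succ]
    simp only [Fin.cons_zero, Fin.cons_succ, List.foldr_cons, Function.comp_apply]
    have hofn : (List.ofFn fun i : Fin l.length =>
        (fun (y : EuclideanSpace ℝ (Fin n)) =>
          p + (Submodule.reflection (ℝ ∙ (l.get i))ᗮ) (y - p)))
        = l.map (fun v (y : EuclideanSpace ℝ (Fin n)) =>
            p + (Submodule.reflection (ℝ ∙ v)ᗮ) (y - p)) := by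
      conv_rhs => rw [← List.ofFn_get l, List.map_ofFn]
      rfl
    rw [hofn, aux_conj_prod, ← hφ]
end

section
/- Every bijective isometry of the taxicab plane that fixes the origin maps the set {(1,0), (0,1), (−1,0), (0,−1)} of four corners of the taxicab unit circle onto itself (i.e., it permutes these four points). -/
/-- The taxicab distance on `ℝ²`. -/
def taxiDist (p q : ℝ × ℝ) : ℝ := |q.1 - p.1| + |q.2 - p.2|

/-- Two points on the taxicab unit circle at taxicab distance `2` have
coordinatewise opposite (or zero) signs. -/
lemma opp_signs {p q : ℝ × ℝ} (hp : |p.1| + |p.2| = 1) (hq : |q.1| + |q.2| = 1)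
    (h : |q.1 - p.1| + |q.2 - p.2| = 2) : p.1 * q.1 ≤ 0 ∧ p.2 * q.2 ≤ 0 := by
  have h1 : |q.1 - p.1| ≤ |q.1| + |p.1| := abs_sub q.1 p.1
  have h2 : |q.2 - p.2| ≤ |q.2| + |p.2| := abs_sub q.2 p.2
  have e1 : |q.1 - p.1| = |q.1| + |p.1| := by linarith
  have e2 : |q.2 - p.2| = |q.2| + |p.2| := by linarith
  have s1 : (q.1 - p.1)^2 = (|q.1| + |p.1|)^2 := by rw [← sq_abs, e1]
  have s2 : (q.2 - p.2)^2 = (|q.2| + |p.2|)^2 := by rw [← sq_abs, e2]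
  constructor
  · nlinarith [s1, sq_abs q.1, sq_abs p.1, abs_mul p.1 q.1, abs_nonneg (p.1 * q.1)]
  · nlinarith [s2, sq_abs q.2, sq_abs p.2, abs_mul p.2 q.2, abs_nonneg (p.2 * q.2)]

/-- Sign pigeonhole: among four points with pairwise coordinatewise opposite signs,
three of which lie on the unit circle, the first has a vanishing coordinate. -/
lemma corner_aux {a b c d : ℝ × ℝ}
    (hb : |b.1| + |b.2| = 1) (hc : |c.1| + |c.2| = 1) (hd : |d.1| + |d.2| = 1)
    (hab1 : a.1 * b.1 ≤ 0) (hac1 : a.1 * c.1 ≤ 0) (had1 : a.1 * d.1 ≤ 0)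
    (hbc1 : b.1 * c.1 ≤ 0) (hbd1 : b.1 * d.1 ≤ 0) (hcd1 : c.1 * d.1 ≤ 0)
    (hab2 : a.2 * b.2 ≤ 0) (hac2 : a.2 * c.2 ≤ 0) (had2 : a.2 * d.2 ≤ 0)
    (hbc2 : b.2 * c.2 ≤ 0) (hbd2 : b.2 * d.2 ≤ 0) (hcd2 : c.2 * d.2 ≤ 0) :
    a.1 = 0 ∨ a.2 = 0 := by
  by_contra hcon
  push_neg at hcon
  obtain ⟨h1, h2⟩ := hcon
  have ha1 : (0:ℝ) < a.1 ^ 2 := by positivity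
  have ha2 : (0:ℝ) < a.2 ^ 2 := by positivity
  have pbc1 : b.1 * c.1 = 0 := le_antisymm hbc1
    (by nlinarith [mul_nonneg (neg_nonneg.2 hab1) (neg_nonneg.2 hac1)])
  have pbd1 : b.1 * d.1 = 0 := le_antisymm hbd1
    (by nlinarith [mul_nonneg (neg_nonneg.2 hab1) (neg_nonneg.2 had1)])
  have pcd1 : c.1 * d.1 = 0 := le_antisymm hcd1
    (by nlinarith [mul_nonneg (neg_nonneg.2 hac1) (neg_nonneg.2 had1)])
  have pbc2 : b.2 * c.2 = 0 := le_antisymm hbc2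
    (by nlinarith [mul_nonneg (neg_nonneg.2 hab2) (neg_nonneg.2 hac2)])
  have pbd2 : b.2 * d.2 = 0 := le_antisymm hbd2
    (by nlinarith [mul_nonneg (neg_nonneg.2 hab2) (neg_nonneg.2 had2)])
  have pcd2 : c.2 * d.2 = 0 := le_antisymm hcd2
    (by nlinarith [mul_nonneg (neg_nonneg.2 hac2) (neg_nonneg.2 had2)])
  have hbne : b.1 ≠ 0 ∨ b.2 ≠ 0 := by
    by_contra hb0; push_neg at hb0; rw [hb0.1, hb0.2] at hb; norm_num at hb
  have hcne : c.1 ≠ 0 ∨ c.2 ≠ 0 := by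
    by_contra hc0; push_neg at hc0; rw [hc0.1, hc0.2] at hc; norm_num at hc
  have hdne : d.1 ≠ 0 ∨ d.2 ≠ 0 := by
    by_contra hd0; push_neg at hd0; rw [hd0.1, hd0.2] at hd; norm_num at hd
  rcases eq_or_ne b.1 0 with hb1 | hb1
  · have hb2 : b.2 ≠ 0 := hbne.resolve_left (not_not.mpr hb1)
    have hc2 : c.2 = 0 := (mul_eq_zero.mp pbc2).resolve_left hb2
    have hd2 : d.2 = 0 := (mul_eq_zero.mp pbd2).resolve_left hb2
    have hc1 : c.1 ≠ 0 := hcne.resolve_right (not_not.mpr hc2)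
    have hd1 : d.1 ≠ 0 := hdne.resolve_right (not_not.mpr hd2)
    exact hd1 ((mul_eq_zero.mp pcd1).resolve_left hc1)
  · have hc1 : c.1 = 0 := (mul_eq_zero.mp pbc1).resolve_left hb1
    have hd1 : d.1 = 0 := (mul_eq_zero.mp pbd1).resolve_left hb1
    have hc2 : c.2 ≠ 0 := hcne.resolve_left (not_not.mpr hc1)
    have hd2 : d.2 ≠ 0 := hdne.resolve_left (not_not.mpr hd1)
    exact hd2 ((mul_eq_zero.mp pcd2).resolve_left hc2)

/-- A point of the taxicab unit circle with pairwise distance `2` to three other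
circle points (pairwise at distance `2` themselves) is a corner. -/
lemma corner_mem {a b c d : ℝ × ℝ}
    (ha : |a.1| + |a.2| = 1) (hb : |b.1| + |b.2| = 1)
    (hc : |c.1| + |c.2| = 1) (hd : |d.1| + |d.2| = 1)
    (Dab : |b.1 - a.1| + |b.2 - a.2| = 2)
    (Dac : |c.1 - a.1| + |c.2 - a.2| = 2)
    (Dad : |d.1 - a.1| + |d.2 - a.2| = 2)
    (Dbc : |c.1 - b.1| + |c.2 - b.2| = 2)
    (Dbd : |d.1 - b.1| + |d.2 - b.2| = 2)
    (Dcd : |d.1 - c.1| + |d.2 - c.2| = 2) :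
    a ∈ ({(1, 0), (0, 1), (-1, 0), (0, -1)} : Set (ℝ × ℝ)) := by
  obtain ⟨hab1, hab2⟩ := opp_signs ha hb Dab
  obtain ⟨hac1, hac2⟩ := opp_signs ha hc Dac
  obtain ⟨had1, had2⟩ := opp_signs ha hd Dad
  obtain ⟨hbc1, hbc2⟩ := opp_signs hb hc Dbc
  obtain ⟨hbd1, hbd2⟩ := opp_signs hb hd Dbd
  obtain ⟨hcd1, hcd2⟩ := opp_signs hc hd Dcd
  have key := corner_aux hb hc hd hab1 hac1 had1 hbc1 hbd1 hcd1
    hab2 hac2 had2 hbc2 hbd2 hcd2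
  simp only [Set.mem_insert_iff, Set.mem_singleton_iff, Prod.ext_iff]
  rcases key with h | h
  · rw [h] at ha
    simp only [abs_zero, zero_add] at ha
    rcases abs_eq (by norm_num : (0:ℝ) ≤ 1) |>.mp ha with h2 | h2
    · exact Or.inr (Or.inl ⟨h, h2⟩)
    · exact Or.inr (Or.inr (Or.inr ⟨h, h2⟩))
  · rw [h] at ha
    simp only [abs_zero, add_zero] at ha
    rcases abs_eq (by norm_num : (0:ℝ) ≤ 1) |>.mp ha with h1 | h1
    · exact Or.inl ⟨h1, h⟩
    · exact Or.inr (Or.inr (Or.inl ⟨h1, h⟩))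

/-- Every bijective taxicab isometry fixing the origin maps the set
of the four corners `(1,0), (0,1), (−1,0), (0,−1)` of the taxicab unit circle onto
itself. -/
theorem stmt_9 (φ : ℝ × ℝ → ℝ × ℝ) (hbij : Function.Bijective φ)
    (hiso : ∀ p q, taxiDist (φ p) (φ q) = taxiDist p q) (h0 : φ 0 = 0) :
    φ '' ({(1, 0), (0, 1), (-1, 0), (0, -1)} : Set (ℝ × ℝ))
      = {(1, 0), (0, 1), (-1, 0), (0, -1)} := by
  set C : Set (ℝ × ℝ) := {(1, 0), (0, 1), (-1, 0), (0, -1)} with hC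
  have circ : ∀ p : ℝ × ℝ, taxiDist 0 p = 1 → |(φ p).1| + |(φ p).2| = 1 := by
    intro p hp
    have h := hiso 0 p
    rw [h0, hp] at h
    simpa [taxiDist] using h
  have dist2 : ∀ p q : ℝ × ℝ, taxiDist p q = 2 →
      |(φ q).1 - (φ p).1| + |(φ q).2 - (φ p).2| = 2 := by
    intro p q hpq
    have h := hiso p q
    rw [hpq] at h
    simpa [taxiDist] using h
  have ca : |(φ (1, 0)).1| + |(φ (1, 0)).2| = 1 := circ _ (by norm_num [taxiDist])
  have cb : |(φ (0, 1)).1| + |(φ (0, 1)).2| = 1 := circ _ (by norm_num [taxiDist])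
  have cc : |(φ (-1, 0)).1| + |(φ (-1, 0)).2| = 1 := circ _ (by norm_num [taxiDist])
  have cd : |(φ (0, -1)).1| + |(φ (0, -1)).2| = 1 := circ _ (by norm_num [taxiDist])
  have Dab := dist2 (1, 0) (0, 1) (by norm_num [taxiDist])
  have Dac := dist2 (1, 0) ((-1 : ℝ), (0 : ℝ)) (by norm_num [taxiDist])
  have Dad := dist2 (1, 0) ((0 : ℝ), (-1 : ℝ)) (by norm_num [taxiDist])
  have Dbc := dist2 (0, 1) ((-1 : ℝ), (0 : ℝ)) (by norm_num [taxiDist])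
  have Dbd := dist2 (0, 1) ((0 : ℝ), (-1 : ℝ)) (by norm_num [taxiDist])
  have Dcd := dist2 ((-1 : ℝ), (0 : ℝ)) ((0 : ℝ), (-1 : ℝ)) (by norm_num [taxiDist])
  have Dba := dist2 (0, 1) (1, 0) (by norm_num [taxiDist])
  have Dca := dist2 ((-1 : ℝ), (0 : ℝ)) (1, 0) (by norm_num [taxiDist])
  have Dda := dist2 ((0 : ℝ), (-1 : ℝ)) (1, 0) (by norm_num [taxiDist])
  have Dcb := dist2 ((-1 : ℝ), (0 : ℝ)) (0, 1) (by norm_num [taxiDist])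
  have Ddb := dist2 ((0 : ℝ), (-1 : ℝ)) (0, 1) (by norm_num [taxiDist])
  have Ddc := dist2 ((0 : ℝ), (-1 : ℝ)) ((-1 : ℝ), (0 : ℝ)) (by norm_num [taxiDist])
  have hsub : φ '' C ⊆ C := by
    rintro x ⟨p, hp, rfl⟩
    simp only [hC, Set.mem_insert_iff, Set.mem_singleton_iff] at hp
    rcases hp with rfl | rfl | rfl | rfl
    · exact corner_mem ca cb cc cd Dab Dac Dad Dbc Dbd Dcd
    · exact corner_mem cb ca cc cd Dba Dbc Dbd Dac Dad Dcd
    · exact corner_mem cc ca cb cd Dca Dcb Dcd Dab Dad Dbd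
    · exact corner_mem cd ca cb cc Dda Ddb Ddc Dab Dac Dbc
  have hfin : C.Finite := Set.toFinite _
  have hcard : C.ncard ≤ (φ '' C).ncard :=
    le_of_eq (Set.ncard_image_of_injective C hbij.1).symm
  exact Set.eq_of_subset_of_ncard_le hsub hcard hfin
end

section
/- There is no bijective isometry of the taxicab plane that fixes the origin, fixes the points (−1,0) and (0,−1), and swaps the points (1,0) and (0,1). -/
/-- There is no bijective taxicab isometry fixing the origin which
fixes `(−1,0)` and `(0,−1)` and swaps `(1,0)` and `(0,1)`. -/
theorem stmt_10 :
    ¬ ∃ φ : ℝ × ℝ → ℝ × ℝ, Function.Bijective φ ∧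
      (∀ p q, taxiDist (φ p) (φ q) = taxiDist p q) ∧ φ 0 = 0 ∧
      φ (-1, 0) = (-1, 0) ∧ φ (0, -1) = (0, -1) ∧
      φ (1, 0) = (0, 1) ∧ φ (0, 1) = (1, 0) := by
  rintro ⟨φ, -, hiso, h0, -, hm01, h10, -⟩
  set q := φ (1, -1) with hq
  have h1 := hiso (1, 0) (1, -1)
  have h2 := hiso (0, -1) (1, -1)
  have h3 := hiso 0 (1, -1)
  rw [h10] at h1
  rw [hm01] at h2
  rw [h0] at h3
  simp only [taxiDist, ← hq, Prod.fst_zero, Prod.snd_zero] at h1 h2 h3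
  norm_num at h1 h2 h3
  have hb : |q.2| * 2 ≤ |q.2 - 1| + |q.2 + 1| := by
    have := abs_sub (q.2 - 1) (-(q.2 + 1))
    rcases abs_cases q.2 with ⟨e, _⟩ | ⟨e, _⟩ <;>
    rcases abs_cases (q.2 - 1) with ⟨e1, _⟩ | ⟨e1, _⟩ <;>
    rcases abs_cases (q.2 + 1) with ⟨e2, _⟩ | ⟨e2, _⟩ <;> linarith
  have ha : 0 ≤ |q.1| := abs_nonneg _
  linarith
end

section
/- If a bijective isometry of the taxicab plane fixes the origin and fixes each of the four points (1,0), (0,1), (−1,0), (0,−1), then it is the identity map. -/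
lemma withLp_dist_eq (p q : WithLp 1 (ℝ × ℝ)) :
    dist p q = taxiDist (WithLp.equiv 1 (ℝ × ℝ) p) (WithLp.equiv 1 (ℝ × ℝ) q) := by
  rw [WithLp.prod_dist_eq_add (by norm_num : (0:ℝ) < (1:ENNReal).toReal)]
  simp [taxiDist, Real.dist_eq, abs_sub_comm]

/-- A bijective taxicab isometry that fixes the origin and each of
the four corners `(1,0), (0,1), (−1,0), (0,−1)` of the taxicab unit circle is the
identity. -/
theorem stmt_11 (φ : ℝ × ℝ → ℝ × ℝ) (hbij : Function.Bijective φ)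
    (hiso : ∀ p q, taxiDist (φ p) (φ q) = taxiDist p q) (h0 : φ 0 = 0)
    (h1 : φ (1, 0) = (1, 0)) (h2 : φ (0, 1) = (0, 1))
    (h3 : φ (-1, 0) = (-1, 0)) (h4 : φ (0, -1) = (0, -1)) :
    ∀ x, φ x = x := by
  set e := WithLp.equiv 1 (ℝ × ℝ)
  set ψ : WithLp 1 (ℝ × ℝ) → WithLp 1 (ℝ × ℝ) := fun x => e.symm (φ (e x)) with hψ
  have hψbij : Function.Bijective ψ := by
    exact (e.symm.bijective.comp hbij).comp e.bijective
  have hψiso : Isometry ψ := by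
    intro p q
    rw [edist_dist, edist_dist]
    congr 1
    rw [withLp_dist_eq, withLp_dist_eq]
    simp only [hψ, Equiv.apply_symm_apply]
    exact hiso _ _
  set F : WithLp 1 (ℝ × ℝ) ≃ᵢ WithLp 1 (ℝ × ℝ) :=
    ⟨Equiv.ofBijective ψ hψbij, hψiso⟩ with hF
  have hF0 : F 0 = 0 := by
    show e.symm (φ (e 0)) = 0
    have : e (0 : WithLp 1 (ℝ × ℝ)) = 0 := rfl
    rw [this, h0]; rfl
  set L := F.toRealLinearIsometryEquivOfMapZero hF0 with hL
  have hLcoe : ∀ x, (L x : WithLp 1 (ℝ × ℝ)) = ψ x := fun x => by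
    rw [hL, IsometryEquiv.coe_toRealLinearIsometryEquivOfMapZero]; rfl
  intro x
  have hx : e.symm x = x.1 • e.symm (1, 0) + x.2 • e.symm (0, 1) := by
    apply e.injective
    simp [e, Prod.ext_iff, WithLp.ofLp_add, WithLp.ofLp_smul, Equiv.apply_symm_apply]
  have := hLcoe (e.symm x)
  rw [hx, map_add, map_smul, map_smul, hLcoe, hLcoe] at this
  have hψ1 : ψ (e.symm (1,0)) = e.symm (1,0) := by
    simp only [hψ, Equiv.apply_symm_apply, h1]
  have hψ2 : ψ (e.symm (0,1)) = e.symm (0,1) := by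
    simp only [hψ, Equiv.apply_symm_apply, h2]
  rw [hψ1, hψ2, ← hx] at this
  have : ψ (e.symm x) = e.symm x := this.symm
  have := congrArg e this
  simpa only [hψ, Equiv.apply_symm_apply] using this
end

section
/- There are exactly eight bijective isometries of the taxicab plane that fix the origin: a bijection φ : ℝ² → ℝ² preserving the taxicab metric with φ(0,0) = (0,0) must be one of the eight maps (x,y) ↦ (x,y), (−x,y), (x,−y), (y,x), (−y,−x), (−y,x), (−x,−y), (y,−x) (namely the identity, the reflections across the y-axis, the x-axis, the line y = x, and the line y = −x, and the rotations by π/2, π, and −π/2), and conversely each of these eight maps is such an isometry. -/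
private lemma bij_aux (f g : ℝ × ℝ → ℝ × ℝ) (h1 : ∀ p, g (f p) = p)
    (h2 : ∀ p, f (g p) = p) : Function.Bijective f :=
  Function.bijective_iff_has_inverse.mpr ⟨g, h1, h2⟩

private lemma mul_nonneg_of_abs_add (a c : ℝ) (h : |a + c| = |a| + |c|) : 0 ≤ a * c := by
  nlinarith [sq_abs (a + c), sq_abs a, sq_abs c, abs_nonneg a, abs_nonneg c,
    abs_mul a c, le_abs_self (a * c), abs_nonneg (a * c)]

private lemma taxi_linear (φ : ℝ × ℝ → ℝ × ℝ) (hbij : Function.Bijective φ)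
    (hiso : ∀ p q, taxiDist (φ p) (φ q) = taxiDist p q) (h0 : φ 0 = 0) :
    ∀ p : ℝ × ℝ, φ p = p.1 • φ (1, 0) + p.2 • φ (0, 1) := by
  have hdist : ∀ x y : WithLp 1 (ℝ × ℝ),
      dist x y = taxiDist (WithLp.equiv 1 _ x) (WithLp.equiv 1 _ y) := by
    intro x y
    rw [WithLp.prod_dist_eq_add (by norm_num)]
    simp [taxiDist, Real.dist_eq, abs_sub_comm]
  let ψ : WithLp 1 (ℝ × ℝ) ≃ᵢ WithLp 1 (ℝ × ℝ) :=
    { toEquiv := (WithLp.equiv 1 _).trans ((Equiv.ofBijective φ hbij).trans (WithLp.equiv 1 _).symm)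
      isometry_toFun := Isometry.of_dist_eq fun x y => by
        rw [hdist, hdist]; simpa using hiso x.ofLp y.ofLp }
  have h0' : ψ 0 = 0 := by
    show WithLp.toLp 1 (φ (WithLp.ofLp (0 : WithLp 1 (ℝ × ℝ)))) = 0
    rw [WithLp.ofLp_zero, h0, WithLp.toLp_zero]
  let L := ψ.toRealLinearIsometryEquivOfMapZero h0'
  have hL : ∀ x : WithLp 1 (ℝ × ℝ), L x = WithLp.toLp 1 (φ x.ofLp) := fun x => rfl
  intro p
  have hp : WithLp.toLp 1 ((p.1, p.2) : ℝ × ℝ) =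
      p.1 • WithLp.toLp 1 ((1, 0) : ℝ × ℝ) + p.2 • WithLp.toLp 1 ((0, 1) : ℝ × ℝ) := by
    rw [← WithLp.toLp_smul, ← WithLp.toLp_smul, ← WithLp.toLp_add]
    simp [Prod.ext_iff]
  have := congrArg WithLp.ofLp (hL (WithLp.toLp 1 ((p.1, p.2) : ℝ × ℝ)))
  simp only [WithLp.ofLp_toLp] at this
  rw [← this, hp, L.map_add, L.map_smul, L.map_smul, hL, hL]
  simp

/-- A map `φ : ℝ² → ℝ²` is a bijective taxicab isometry fixing the
origin if and only if it is one of the eight maps: the identity, the reflections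
across the `y`-axis, the `x`-axis, the lines `y = x` and `y = −x`, and the rotations
by `π/2`, `π` and `−π/2`. -/
theorem stmt_12 (φ : ℝ × ℝ → ℝ × ℝ) :
    (Function.Bijective φ ∧ (∀ p q, taxiDist (φ p) (φ q) = taxiDist p q) ∧ φ 0 = 0) ↔
    (φ = fun p => (p.1, p.2)) ∨ (φ = fun p => (-p.1, p.2)) ∨
    (φ = fun p => (p.1, -p.2)) ∨ (φ = fun p => (p.2, p.1)) ∨
    (φ = fun p => (-p.2, -p.1)) ∨ (φ = fun p => (-p.2, p.1)) ∨
    (φ = fun p => (-p.1, -p.2)) ∨ (φ = fun p => (p.2, -p.1)) := by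
  constructor
  · rintro ⟨hbij, hiso, h0⟩
    have hlin := taxi_linear φ hbij hiso h0
    obtain ⟨⟨a, b⟩, hu⟩ : ∃ u, φ (1, 0) = u := ⟨_, rfl⟩
    obtain ⟨⟨c, d⟩, hv⟩ : ∃ v, φ (0, 1) = v := ⟨_, rfl⟩
    have hlin' : ∀ p : ℝ × ℝ, φ p = (a * p.1 + c * p.2, b * p.1 + d * p.2) := by
      intro p
      rw [hlin p, hu, hv]
      simp [Prod.ext_iff]
      constructor <;> ring
    have h1 : |a| + |b| = 1 := by
      have := hiso 0 (1, 0)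
      simp [taxiDist, hlin'] at this
      linarith
    have h2 : |c| + |d| = 1 := by
      have := hiso 0 (0, 1)
      simp [taxiDist, hlin'] at this
      linarith
    have h3 : |a - c| + |b - d| = 2 := by
      have := hiso (0, 1) (1, 0)
      simp [taxiDist, hlin'] at this
      linarith
    have h4 : |a + c| + |b + d| = 2 := by
      have := hiso (0, -1) (1, 0)
      simp [taxiDist, hlin'] at this
      linarith
    -- derive a * c = 0 and b * d = 0
    have habs1 : |a + c| = |a| + |c| := by
      have t1 : |a + c| ≤ |a| + |c| := abs_add_le a c
      have t2 : |b + d| ≤ |b| + |d| := abs_add_le b d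
      linarith
    have habs2 : |b + d| = |b| + |d| := by
      have t1 : |a + c| ≤ |a| + |c| := abs_add_le a c
      have t2 : |b + d| ≤ |b| + |d| := abs_add_le b d
      linarith
    have habs3 : |a - c| = |a| + |c| := by
      have t1 := abs_add_le a (-c)
      have t2 := abs_add_le b (-d)
      rw [← sub_eq_add_neg, abs_neg] at t1 t2
      linarith
    have habs4 : |b - d| = |b| + |d| := by
      have t1 := abs_add_le a (-c)
      have t2 := abs_add_le b (-d)
      rw [← sub_eq_add_neg, abs_neg] at t1 t2
      linarith
    have hac : a * c = 0 := by
      have p1 := mul_nonneg_of_abs_add a c habs1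
      have p2 := mul_nonneg_of_abs_add a (-c)
        (by rw [← sub_eq_add_neg, abs_neg]; exact habs3)
      nlinarith
    have hbd : b * d = 0 := by
      have p1 := mul_nonneg_of_abs_add b d habs2
      have p2 := mul_nonneg_of_abs_add b (-d)
        (by rw [← sub_eq_add_neg, abs_neg]; exact habs4)
      nlinarith
    rcases mul_eq_zero.mp hac with ha | hc
    · -- a = 0, so |b| = 1, b ≠ 0, d = 0, |c| = 1
      subst ha
      have hb1 : |b| = 1 := by simpa using h1
      have hbne : b ≠ 0 := fun h => by simp [h] at hb1
      have hd : d = 0 := by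
        rcases mul_eq_zero.mp hbd with h | h
        · exact absurd h hbne
        · exact h
      subst hd
      have hc1 : |c| = 1 := by simpa using h2
      rcases (abs_eq (by norm_num : (0:ℝ) ≤ 1)).mp hb1 with hb | hb <;>
        rcases (abs_eq (by norm_num : (0:ℝ) ≤ 1)).mp hc1 with hc | hc <;>
        subst hb <;> subst hc
      · exact Or.inr (Or.inr (Or.inr (Or.inl (funext fun p => by rw [hlin' p]; norm_num))))
      · exact Or.inr (Or.inr (Or.inr (Or.inr (Or.inr (Or.inl
          (funext fun p => by rw [hlin' p]; norm_num))))))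
      · exact Or.inr (Or.inr (Or.inr (Or.inr (Or.inr (Or.inr (Or.inr
          (funext fun p => by rw [hlin' p]; norm_num)))))))
      · exact Or.inr (Or.inr (Or.inr (Or.inr (Or.inl
          (funext fun p => by rw [hlin' p]; norm_num)))))
    · -- c = 0, so |d| = 1, d ≠ 0, b = 0, |a| = 1
      subst hc
      have hd1 : |d| = 1 := by simpa using h2
      have hdne : d ≠ 0 := fun h => by simp [h] at hd1
      have hb : b = 0 := by
        rcases mul_eq_zero.mp hbd with h | h
        · exact h
        · exact absurd h hdne
      subst hb
      have ha1 : |a| = 1 := by simpa using h1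
      rcases (abs_eq (by norm_num : (0:ℝ) ≤ 1)).mp ha1 with ha | ha <;>
        rcases (abs_eq (by norm_num : (0:ℝ) ≤ 1)).mp hd1 with hd | hd <;>
        subst ha <;> subst hd
      · exact Or.inl (funext fun p => by rw [hlin' p]; norm_num)
      · exact Or.inr (Or.inr (Or.inl (funext fun p => by rw [hlin' p]; norm_num)))
      · exact Or.inr (Or.inl (funext fun p => by rw [hlin' p]; norm_num))
      · exact Or.inr (Or.inr (Or.inr (Or.inr (Or.inr (Or.inr (Or.inl
          (funext fun p => by rw [hlin' p]; norm_num)))))))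
  · rintro (rfl | rfl | rfl | rfl | rfl | rfl | rfl | rfl)
    · exact ⟨bij_aux _ (fun p => (p.1, p.2)) (fun p => by simp) (fun p => by simp),
        fun p q => by simp [taxiDist], by simp [Prod.ext_iff]⟩
    · exact ⟨bij_aux _ (fun p => (-p.1, p.2)) (fun p => by simp) (fun p => by simp),
        fun p q => by simp [taxiDist, neg_sub_neg, ← sub_eq_add_neg, abs_sub_comm, add_comm],
        by simp [Prod.ext_iff]⟩
    · exact ⟨bij_aux _ (fun p => (p.1, -p.2)) (fun p => by simp) (fun p => by simp),
        fun p q => by simp [taxiDist, neg_sub_neg, ← sub_eq_add_neg, abs_sub_comm, add_comm],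
        by simp [Prod.ext_iff]⟩
    · exact ⟨bij_aux _ (fun p => (p.2, p.1)) (fun p => by simp) (fun p => by simp),
        fun p q => by simp [taxiDist, add_comm], by simp [Prod.ext_iff]⟩
    · exact ⟨bij_aux _ (fun p => (-p.2, -p.1)) (fun p => by simp) (fun p => by simp),
        fun p q => by simp [taxiDist, neg_sub_neg, ← sub_eq_add_neg, abs_sub_comm, add_comm],
        by simp [Prod.ext_iff]⟩
    · exact ⟨bij_aux _ (fun p => (p.2, -p.1)) (fun p => by simp) (fun p => by simp),
        fun p q => by simp [taxiDist, neg_sub_neg, ← sub_eq_add_neg, abs_sub_comm, add_comm],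
        by simp [Prod.ext_iff]⟩
    · exact ⟨bij_aux _ (fun p => (-p.1, -p.2)) (fun p => by simp) (fun p => by simp),
        fun p q => by simp [taxiDist, neg_sub_neg, ← sub_eq_add_neg, abs_sub_comm, add_comm],
        by simp [Prod.ext_iff]⟩
    · exact ⟨bij_aux _ (fun p => (-p.2, p.1)) (fun p => by simp) (fun p => by simp),
        fun p q => by simp [taxiDist, neg_sub_neg, ← sub_eq_add_neg, abs_sub_comm, add_comm],
        by simp [Prod.ext_iff]⟩
end

section
/- The group of bijective isometries of the taxicab plane that fix the origin, under composition, is isomorphic to the dihedral group of order 8 (the symmetry group of a square). -/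
/-- The group (under composition) of bijective isometries of the taxicab plane that
fix the origin, as a subgroup of the group of bijections of `ℝ²`. -/
def taxiIsomFixingOrigin : Subgroup (Equiv.Perm (ℝ × ℝ)) where
  carrier := {φ | (∀ p q, taxiDist (φ p) (φ q) = taxiDist p q) ∧ φ 0 = 0}
  one_mem' := by
    constructor
    · intro p q; rfl
    · rfl
  mul_mem' := by
    rintro φ ψ ⟨hφ, hφ0⟩ ⟨hψ, hψ0⟩
    constructor
    · intro p q
      simp only [Equiv.Perm.coe_mul, Function.comp_apply, hφ, hψ]
    · simp only [Equiv.Perm.coe_mul, Function.comp_apply, hψ0, hφ0]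
  inv_mem' := by
    rintro φ ⟨hφ, hφ0⟩
    constructor
    · intro p q
      have := hφ (φ⁻¹ p) (φ⁻¹ q)
      simpa using this.symm
    · have : φ⁻¹ (φ 0) = 0 := Equiv.symm_apply_apply φ 0
      rwa [hφ0] at this

namespace Stmt13

/-- rotation by 90° -/
def Rp : Equiv.Perm (ℝ × ℝ) where
  toFun p := (-p.2, p.1)
  invFun p := (p.2, -p.1)
  left_inv p := by simp
  right_inv p := by simp

/-- reflection in x-axis -/
def Sp : Equiv.Perm (ℝ × ℝ) where
  toFun p := (p.1, -p.2)
  invFun p := (p.1, -p.2)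
  left_inv p := by simp
  right_inv p := by simp

theorem hRmem : Rp ∈ taxiIsomFixingOrigin := by
  constructor
  · intro p q
    simp [taxiDist, Rp, neg_add_eq_sub, abs_sub_comm, add_comm, ← sub_eq_add_neg]
  · simp [Rp]

theorem hSmem : Sp ∈ taxiIsomFixingOrigin := by
  constructor
  · intro p q
    simp [taxiDist, Sp, neg_add_eq_sub, abs_sub_comm]
  · simp [Sp]

def rG : taxiIsomFixingOrigin := ⟨Rp, hRmem⟩
def sG : taxiIsomFixingOrigin := ⟨Sp, hSmem⟩

theorem rG4 : rG ^ 4 = 1 := by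
  apply Subtype.ext
  show Rp ^ 4 = 1
  apply Equiv.ext; intro p
  simp [Rp, pow_succ]

theorem sG2 : sG * sG = 1 := by
  apply Subtype.ext
  show Sp * Sp = 1
  apply Equiv.ext; intro p
  simp [Sp]

theorem rinv : rG⁻¹ = rG ^ 3 := by
  have : rG ^ 3 * rG = 1 := by rw [← pow_succ]; exact rG4
  rw [eq_comm, eq_inv_iff_mul_eq_one, this]

theorem hcomm : rG * sG = sG * rG⁻¹ := by
  rw [rinv]
  apply Subtype.ext
  show Rp * Sp = Sp * Rp ^ 3
  apply Equiv.ext; intro p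
  simp [Rp, Sp, pow_succ]

theorem pow_mul_s (n : ℕ) : rG ^ n * sG = sG * rG⁻¹ ^ n := by
  induction n with
  | zero => simp
  | succ k ih =>
    rw [pow_succ, mul_assoc, hcomm, ← mul_assoc, ih, pow_succ, mul_assoc]

theorem rpow_mod (m : ℕ) : rG ^ m = rG ^ (m % 4) := by
  conv_lhs => rw [← Nat.div_add_mod m 4]
  rw [pow_add, pow_mul, rG4, one_pow, one_mul]

theorem rpow_add (i j : ZMod 4) : rG ^ (i + j).val = rG ^ i.val * rG ^ j.val := by
  rw [← pow_add, ZMod.val_add, ← rpow_mod]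

theorem sval (i : ZMod 4) : rG ^ i.val * sG = sG * rG ^ (-i).val := by
  have h1 : (-i : ZMod 4) = 3 * i := by revert i; decide
  have h2 : (3 : ZMod 4).val = 3 := rfl
  rw [pow_mul_s, rinv, ← pow_mul, h1, ZMod.val_mul, ← rpow_mod, h2]

def f0 : DihedralGroup 4 → taxiIsomFixingOrigin
  | .r i => rG ^ i.val
  | .sr i => sG * rG ^ i.val

def f : DihedralGroup 4 →* taxiIsomFixingOrigin where
  toFun := f0
  map_one' := by show f0 (.r 0) = 1; show rG ^ (0 : ZMod 4).val = 1; rw [ZMod.val_zero, pow_zero]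
  map_mul' := by
    rintro (i | i) (j | j)
    · show rG ^ (i + j).val = rG ^ i.val * rG ^ j.val
      exact rpow_add i j
    · show sG * rG ^ (j - i).val = rG ^ i.val * (sG * rG ^ j.val)
      rw [← mul_assoc, sval, mul_assoc, ← rpow_add, neg_add_eq_sub]
    · show sG * rG ^ (i + j).val = sG * rG ^ i.val * rG ^ j.val
      rw [mul_assoc, ← rpow_add]
    · show rG ^ (j - i).val = sG * rG ^ i.val * (sG * rG ^ j.val)
      rw [mul_assoc, ← mul_assoc (rG ^ i.val), sval, ← mul_assoc, ← mul_assoc, sG2,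
        one_mul, ← rpow_add, neg_add_eq_sub]
-- helper: |x+y| + |x-y| = 2 * max |x| |y|
theorem abs_helper (x y : ℝ) : |x + y| + |x - y| = 2 * max |x| |y| := by
  rcases abs_cases (x + y) with ⟨h1, _⟩ | ⟨h1, _⟩ <;>
  rcases abs_cases (x - y) with ⟨h2, _⟩ | ⟨h2, _⟩ <;>
  rcases abs_cases x with ⟨h3, h3'⟩ | ⟨h3, h3'⟩ <;>
  rcases abs_cases y with ⟨h4, h4'⟩ | ⟨h4, h4'⟩ <;>
  rcases max_cases |x| |y| with ⟨h5, h5'⟩ | ⟨h5, h5'⟩ <;>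
  linarith

theorem signcase (a b c d : ℝ) (h1 : |a| + |b| = 1) (h2 : |c| + |d| = 1)
    (h3 : |a + c| + |b + d| = 2) (h4 : |a - c| + |b - d| = 2) :
    (a = 0 ∧ d = 0 ∧ |b| = 1 ∧ |c| = 1) ∨ (b = 0 ∧ c = 0 ∧ |a| = 1 ∧ |d| = 1) := by
  have m1 := abs_helper a c
  have m2 := abs_helper b d
  have key : max |a| |c| + max |b| |d| = 2 := by linarith
  have na := abs_nonneg a; have nb := abs_nonneg b
  have nc := abs_nonneg c; have nd := abs_nonneg d
  rcases le_total |a| |c| with hac | hac <;> rcases le_total |b| |d| with hbd | hbd <;>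
    [skip; skip; skip; skip]
  · -- max = |c|, |d| : |c|+|d| = 2 contradiction
    rw [max_eq_right hac, max_eq_right hbd] at key; linarith
  · -- max = |c|, |b|
    rw [max_eq_right hac, max_eq_left hbd] at key
    left
    have hb1 : |b| = 1 := by linarith
    have hc1 : |c| = 1 := by linarith
    have ha0 : |a| = 0 := by linarith
    have hd0 : |d| = 0 := by linarith
    exact ⟨abs_eq_zero.mp ha0, abs_eq_zero.mp hd0, hb1, hc1⟩
  · -- max = |a|, |d|
    rw [max_eq_left hac, max_eq_right hbd] at key
    right
    have ha1 : |a| = 1 := by linarith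
    have hd1 : |d| = 1 := by linarith
    have hb0 : |b| = 0 := by linarith
    have hc0 : |c| = 0 := by linarith
    exact ⟨abs_eq_zero.mp hb0, abs_eq_zero.mp hc0, ha1, hd1⟩
  · rw [max_eq_left hac, max_eq_left hbd] at key; linarith
theorem linearity (φ : Equiv.Perm (ℝ × ℝ))
    (hiso : ∀ p q, taxiDist (φ p) (φ q) = taxiDist p q) (h0 : φ 0 = 0) :
    (∀ p q : ℝ × ℝ, φ (p + q) = φ p + φ q) ∧ (∀ (c : ℝ) (p : ℝ × ℝ), φ (c • p) = c • φ p) := by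
  set eq1 := WithLp.equiv 1 (ℝ × ℝ) with heq1
  have hdist : ∀ x y : WithLp 1 (ℝ × ℝ), dist x y = taxiDist (eq1 x) (eq1 y) := by
    intro x y
    rw [WithLp.prod_dist_eq_add (by norm_num)]
    simp [Real.dist_eq, taxiDist, abs_sub_comm]
    rfl
  let e : WithLp 1 (ℝ × ℝ) ≃ᵢ WithLp 1 (ℝ × ℝ) :=
    { toEquiv := eq1.trans (φ.trans eq1.symm)
      isometry_toFun := Isometry.of_dist_eq (fun x y => by
        rw [hdist, hdist]
        exact hiso _ _) }
  have h00 : e 0 = 0 := by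
    show eq1.symm (φ (eq1 0)) = 0
    rw [heq1, WithLp.equiv_apply, WithLp.ofLp_zero, h0, WithLp.equiv_symm_apply, WithLp.toLp_zero]
  let L := e.toRealLinearIsometryEquivOfMapZero h00
  have hL : ∀ x, L x = eq1.symm (φ (eq1 x)) := fun x => by
    rw [show (L : WithLp 1 (ℝ × ℝ) → WithLp 1 (ℝ × ℝ)) = e from
      IsometryEquiv.coe_toRealLinearIsometryEquivOfMapZero e h00]
    rfl
  constructor
  · intro p q
    have := L.map_add (eq1.symm p) (eq1.symm q)
    rw [hL, hL, hL, ← (show ∀ x y, eq1.symm (x + y) = eq1.symm x + eq1.symm y from fun _ _ => rfl)] at this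
    simp only [Equiv.apply_symm_apply] at this
    exact eq1.symm.injective (by rw [this, (show ∀ x y, eq1.symm (x + y) = eq1.symm x + eq1.symm y from fun _ _ => rfl)])
  · intro c p
    have := L.map_smul c (eq1.symm p)
    rw [hL, hL, ← (show ∀ (c : ℝ) x, eq1.symm (c • x) = c • eq1.symm x from fun _ _ => rfl)] at this
    simp only [Equiv.apply_symm_apply] at this
    exact eq1.symm.injective (by rw [this, (show ∀ (c : ℝ) x, eq1.symm (c • x) = c • eq1.symm x from fun _ _ => rfl)])
theorem zv0 : ((0 : ZMod 4)).val = 0 := rfl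
theorem zv1 : ((1 : ZMod 4)).val = 1 := rfl
theorem zv2 : ((2 : ZMod 4)).val = 2 := rfl
theorem zv3 : ((3 : ZMod 4)).val = 3 := rfl

theorem classify (φ : Equiv.Perm (ℝ × ℝ)) (hφ : φ ∈ taxiIsomFixingOrigin) :
    ∃ x : DihedralGroup 4, ((f x : taxiIsomFixingOrigin) : Equiv.Perm (ℝ × ℝ)) = φ := by
  obtain ⟨hiso, h0⟩ := hφ
  obtain ⟨hadd, hsmul⟩ := linearity φ hiso h0
  set u := φ (1, 0) with hu
  set v := φ (0, 1) with hv
  have hrep : ∀ p : ℝ × ℝ, φ p = p.1 • u + p.2 • v := by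
    intro p
    have hp : (p : ℝ × ℝ) = p.1 • ((1:ℝ), (0:ℝ)) + p.2 • ((0:ℝ), (1:ℝ)) := by
      ext <;> simp
    conv_lhs => rw [hp]
    rw [hadd, hsmul, hsmul]
  have n1 : |u.1| + |u.2| = 1 := by
    have := hiso 0 (1, 0)
    rw [h0] at this
    simpa [taxiDist] using this
  have n2 : |v.1| + |v.2| = 1 := by
    have := hiso 0 (0, 1)
    rw [h0] at this
    simpa [taxiDist] using this
  have n3 : |u.1 - v.1| + |u.2 - v.2| = 2 := by
    have := hiso (1, 0) (0, 1)
    simp [taxiDist] at this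
    rw [abs_sub_comm u.1 v.1, abs_sub_comm u.2 v.2]
    linarith
  have n4 : |u.1 + v.1| + |u.2 + v.2| = 2 := by
    have := hiso 0 (1, 1)
    rw [h0, hrep (1, 1)] at this
    simp [taxiDist] at this
    linarith
  rcases signcase u.1 u.2 v.1 v.2 n1 n2 n4 n3 with ⟨ha, hd, hb, hc⟩ | ⟨hb, hc, ha, hd⟩
  · rcases (abs_eq (by norm_num : (0:ℝ) ≤ 1)).mp hb with hb1 | hb1 <;>
      rcases (abs_eq (by norm_num : (0:ℝ) ≤ 1)).mp hc with hc1 | hc1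
    · exact ⟨.sr 3, by
      apply Equiv.ext; intro p; rw [hrep p]; apply Prod.ext <;>
        simp [f, f0, rG, sG, Rp, Sp, pow_succ, zv0, zv1, zv2, zv3, ha, hb1, hc1, hd] <;> ring⟩
    · exact ⟨.r 1, by
      apply Equiv.ext; intro p; rw [hrep p]; apply Prod.ext <;>
        simp [f, f0, rG, sG, Rp, Sp, pow_succ, zv0, zv1, zv2, zv3, ha, hb1, hc1, hd] <;> ring⟩
    · exact ⟨.r 3, by
      apply Equiv.ext; intro p; rw [hrep p]; apply Prod.ext <;>
        simp [f, f0, rG, sG, Rp, Sp, pow_succ, zv0, zv1, zv2, zv3, ha, hb1, hc1, hd] <;> ring⟩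
    · exact ⟨.sr 1, by
      apply Equiv.ext; intro p; rw [hrep p]; apply Prod.ext <;>
        simp [f, f0, rG, sG, Rp, Sp, pow_succ, zv0, zv1, zv2, zv3, ha, hb1, hc1, hd] <;> ring⟩
  · rcases (abs_eq (by norm_num : (0:ℝ) ≤ 1)).mp ha with ha1 | ha1 <;>
      rcases (abs_eq (by norm_num : (0:ℝ) ≤ 1)).mp hd with hd1 | hd1
    · exact ⟨.r 0, by
      apply Equiv.ext; intro p; rw [hrep p]; apply Prod.ext <;>
        simp [f, f0, rG, sG, Rp, Sp, pow_succ, zv0, zv1, zv2, zv3, ha1, hb, hc, hd1, -DihedralGroup.r_zero] <;> ring⟩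
    · exact ⟨.sr 0, by
      apply Equiv.ext; intro p; rw [hrep p]; apply Prod.ext <;>
        simp [f, f0, rG, sG, Rp, Sp, pow_succ, zv0, zv1, zv2, zv3, ha1, hb, hc, hd1] <;> ring⟩
    · exact ⟨.sr 2, by
      apply Equiv.ext; intro p; rw [hrep p]; apply Prod.ext <;>
        simp [f, f0, rG, sG, Rp, Sp, pow_succ, zv0, zv1, zv2, zv3, ha1, hb, hc, hd1] <;> ring⟩
    · exact ⟨.r 2, by
      apply Equiv.ext; intro p; rw [hrep p]; apply Prod.ext <;>
        simp [f, f0, rG, sG, Rp, Sp, pow_succ, zv0, zv1, zv2, zv3, ha1, hb, hc, hd1] <;> ring⟩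


theorem f_inj : Function.Injective f := by
  rw [injective_iff_map_eq_one]
  rintro (i | i) h <;> fin_cases i
  · rfl
  all_goals {
    exfalso
    have h2 := congrArg (fun g : taxiIsomFixingOrigin => ((g : Equiv.Perm (ℝ × ℝ)) ((1:ℝ), (0:ℝ))).1) h
    have h3 := congrArg (fun g : taxiIsomFixingOrigin => ((g : Equiv.Perm (ℝ × ℝ)) ((1:ℝ), (0:ℝ))).2) h
    have h4 := congrArg (fun g : taxiIsomFixingOrigin => ((g : Equiv.Perm (ℝ × ℝ)) ((1:ℝ), (1:ℝ))).2) h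
    first
    | (simp [f, f0, rG, sG, Rp, Sp, pow_succ, zv0, zv1, zv2, zv3, ZMod.val] at h2 <;> norm_num at h2 <;> done)
    | (simp [f, f0, rG, sG, Rp, Sp, pow_succ, zv0, zv1, zv2, zv3, ZMod.val] at h3 <;> norm_num at h3 <;> done)
    | (simp [f, f0, rG, sG, Rp, Sp, pow_succ, zv0, zv1, zv2, zv3, ZMod.val] at h4 <;> norm_num at h4 <;> done) }

theorem f_surj : Function.Surjective f := by
  rintro ⟨φ, hφ⟩
  obtain ⟨x, hx⟩ := classify φ hφ
  exact ⟨x, Subtype.ext hx⟩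

end Stmt13



/-- The group of bijective isometries of the taxicab plane fixing
the origin is isomorphic to the dihedral group of order `8` (the symmetry group of a
square). -/
theorem stmt_13 : Nonempty (taxiIsomFixingOrigin ≃* DihedralGroup 4) :=
  ⟨(MulEquiv.ofBijective Stmt13.f ⟨Stmt13.f_inj, Stmt13.f_surj⟩).symm⟩
end

section
/- Every bijective isometry of the plane ℝ² equipped with the ℓ^∞ (sup) metric is the composition of a translation with one of the eight symmetries of the ℓ^∞ unit circle: if φ : ℝ² → ℝ² is a bijection preserving the sup metric, then there is a vector b ∈ ℝ² and a map σ among (x,y) ↦ (x,y), (−x,y), (x,−y), (y,x), (−y,−x), (−y,x), (−x,−y), (y,−x) such that φ(v) = σ(v) + b for all v ∈ ℝ². -/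
/-- The `ℓ^∞` (sup) distance on `ℝ²`. -/
def supDist (u v : ℝ × ℝ) : ℝ := max |v.1 - u.1| |v.2 - u.2|

lemma key_cases (a b c d : ℝ) (h1 : max |a| |b| = 1) (h2 : max |c| |d| = 1)
    (h3 : max |a + c| |b + d| = 1) (h4 : max |a - c| |b - d| = 1) :
    ((a = 1 ∨ a = -1) ∧ b = 0 ∧ c = 0 ∧ (d = 1 ∨ d = -1)) ∨
    (a = 0 ∧ (b = 1 ∨ b = -1) ∧ (c = 1 ∨ c = -1) ∧ d = 0) := by
  have e1 := max_eq_iff.1 h1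
  have e2 := max_eq_iff.1 h2
  have p3 : |a + c| ≤ 1 ∧ |b + d| ≤ 1 := by
    constructor <;> [exact le_max_left _ _ |>.trans_eq h3; exact le_max_right _ _ |>.trans_eq h3]
  have p4 : |a - c| ≤ 1 ∧ |b - d| ≤ 1 := by
    constructor <;> [exact le_max_left _ _ |>.trans_eq h4; exact le_max_right _ _ |>.trans_eq h4]
  obtain ⟨q3, q3'⟩ := abs_le.1 p3.1
  obtain ⟨r3, r3'⟩ := abs_le.1 p3.2
  obtain ⟨q4, q4'⟩ := abs_le.1 p4.1
  obtain ⟨r4, r4'⟩ := abs_le.1 p4.2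
  rcases e1 with ⟨ha, _⟩ | ⟨hb, _⟩
  · -- |a| = 1
    have hc0 : c = 0 := by rcases abs_eq (by norm_num : (0:ℝ) ≤ 1) |>.1 ha with h | h <;> linarith
    have hd1 : |d| = 1 := by
      rcases e2 with ⟨hc, _⟩ | ⟨hd, _⟩
      · rw [hc0] at hc; simp at hc
      · exact hd
    have hb0 : b = 0 := by rcases abs_eq (by norm_num : (0:ℝ) ≤ 1) |>.1 hd1 with h | h <;> linarith
    exact Or.inl ⟨abs_eq (by norm_num) |>.1 ha, hb0, hc0, abs_eq (by norm_num) |>.1 hd1⟩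
  · -- |b| = 1
    have hd0 : d = 0 := by rcases abs_eq (by norm_num : (0:ℝ) ≤ 1) |>.1 hb with h | h <;> linarith
    have hc1 : |c| = 1 := by
      rcases e2 with ⟨hc, _⟩ | ⟨hd, _⟩
      · exact hc
      · rw [hd0] at hd; simp at hd
    have ha0 : a = 0 := by rcases abs_eq (by norm_num : (0:ℝ) ≤ 1) |>.1 hc1 with h | h <;> linarith
    exact Or.inr ⟨ha0, abs_eq (by norm_num) |>.1 hb, abs_eq (by norm_num) |>.1 hc1, hd0⟩

/-- Every bijective isometry of the plane with the `ℓ^∞` (sup)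
metric is the composition of a translation with one of the eight symmetries of the
`ℓ^∞` unit square: there are `b : ℝ²` and a symmetry `σ` among the eight listed
linear maps with `φ v = σ v + b` for all `v`. -/
theorem stmt_18 (φ : ℝ × ℝ → ℝ × ℝ) (hbij : Function.Bijective φ)
    (hiso : ∀ u v, supDist (φ u) (φ v) = supDist u v) :
    ∃ b : ℝ × ℝ,
      (∀ v : ℝ × ℝ, φ v = (v.1, v.2) + b) ∨ (∀ v : ℝ × ℝ, φ v = (-v.1, v.2) + b) ∨
      (∀ v : ℝ × ℝ, φ v = (v.1, -v.2) + b) ∨ (∀ v : ℝ × ℝ, φ v = (v.2, v.1) + b) ∨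
      (∀ v : ℝ × ℝ, φ v = (-v.2, -v.1) + b) ∨ (∀ v : ℝ × ℝ, φ v = (-v.2, v.1) + b) ∨
      (∀ v : ℝ × ℝ, φ v = (-v.1, -v.2) + b) ∨ (∀ v : ℝ × ℝ, φ v = (v.2, -v.1) + b) := by
  -- supDist is the metric-space distance on ℝ × ℝ
  have hsup : ∀ u v : ℝ × ℝ, supDist u v = dist u v := by
    intro u v
    rw [Prod.dist_eq, Real.dist_eq, Real.dist_eq, supDist, abs_sub_comm u.1 v.1,
      abs_sub_comm u.2 v.2]
  have hiso' : Isometry φ := Isometry.of_dist_eq fun u v => by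
    rw [← hsup, ← hsup]; exact hiso u v
  let e : (ℝ × ℝ) ≃ᵢ (ℝ × ℝ) := ⟨Equiv.ofBijective φ hbij, hiso'⟩
  let L := e.toRealLinearIsometryEquiv
  have hLapp : ∀ v, (L : ℝ × ℝ → ℝ × ℝ) v = φ v - φ 0 := fun v => by
    simp [L, e, IsometryEquiv.toRealLinearIsometryEquiv_apply]; rfl
  have hφ : ∀ v, φ v = (L : ℝ × ℝ → ℝ × ℝ) v + φ 0 := fun v => by
    rw [hLapp]; ring
  set u1 : ℝ × ℝ := (L : ℝ × ℝ → ℝ × ℝ) (1, 0) with hu1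
  set u2 : ℝ × ℝ := (L : ℝ × ℝ → ℝ × ℝ) (0, 1) with hu2
  set a := u1.1; set b := u1.2; set c := u2.1; set d := u2.2
  have hnorm : ∀ v : ℝ × ℝ, ‖(L : ℝ × ℝ → ℝ × ℝ) v‖ = ‖v‖ := fun v => L.norm_map v
  have hLlin : ∀ x y : ℝ, (L : ℝ × ℝ → ℝ × ℝ) (x, y) = (x * a + y * c, x * b + y * d) := by
    intro x y
    have hxy : (x, y) = x • ((1 : ℝ), (0 : ℝ)) + y • ((0 : ℝ), (1 : ℝ)) := by
      simp [Prod.ext_iff]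
    rw [hxy, map_add, map_smul, map_smul, ← hu1, ← hu2]
    refine Prod.ext ?_ ?_ <;> simp [Prod.smul_def] <;> ring
  have hn : ∀ x y : ℝ, max |x * a + y * c| |x * b + y * d| = max |x| |y| := by
    intro x y
    have := hnorm (x, y)
    rwa [hLlin, Prod.norm_def, Prod.norm_def, Real.norm_eq_abs, Real.norm_eq_abs,
      Real.norm_eq_abs, Real.norm_eq_abs] at this
  have h1 := hn 1 0
  have h2 := hn 0 1
  have h3 := hn 1 1
  have h4 := hn 1 (-1)
  simp only [one_mul, zero_mul, add_zero, zero_add, neg_mul, neg_one_mul,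
    abs_zero, abs_one] at h1 h2 h3 h4
  norm_num at h1 h2 h3 h4
  have key := key_cases a b c d h1 h2 h3 ?_
  swap
  · convert h4 using 3 <;> ring
  refine ⟨φ 0, ?_⟩
  have hform : ∀ v : ℝ × ℝ, φ v = (v.1 * a + v.2 * c, v.1 * b + v.2 * d) + φ 0 := by
    intro v
    rw [hφ v, ← hLlin v.1 v.2]
  rcases key with ⟨ha | ha, hb, hc, hd | hd⟩ | ⟨ha, hb | hb, hc | hc, hd⟩
  · exact Or.inl fun v => by rw [hform v]; rw [ha, hb, hc, hd]; ring_nf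
  · refine Or.inr (Or.inr (Or.inl fun v => ?_)); rw [hform v, ha, hb, hc, hd]; ring_nf
  · refine Or.inr (Or.inl fun v => ?_); rw [hform v, ha, hb, hc, hd]; ring_nf
  · refine Or.inr (Or.inr (Or.inr (Or.inr (Or.inr (Or.inr (Or.inl fun v => ?_)))))); rw [hform v, ha, hb, hc, hd]; ring_nf
  · refine Or.inr (Or.inr (Or.inr (Or.inl fun v => ?_))); rw [hform v, ha, hb, hc, hd]; ring_nf
  · refine Or.inr (Or.inr (Or.inr (Or.inr (Or.inr (Or.inl fun v => ?_))))); rw [hform v, ha, hb, hc, hd]; ring_nf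
  · refine Or.inr (Or.inr (Or.inr (Or.inr (Or.inr (Or.inr (Or.inr fun v => ?_)))))); rw [hform v, ha, hb, hc, hd]; ring_nf
  · refine Or.inr (Or.inr (Or.inr (Or.inr (Or.inl fun v => ?_)))); rw [hform v, ha, hb, hc, hd]; ring_nf
end
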